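/- arXiv:2304.05651 — 4 statements merged into one kernel-verified Lean document; each statement's English description precedes it below -/
import Mathlib

section
/- The degenerate Bell numbers satisfy φ_{n,λ} = (1/e) ∑_{k=0}^∞ (k)_{n,λ}/k! for all n ≥ 0. -/
open Real MeasureTheory ProbabilityTheory Filter Asymptotics

/-- The degenerate falling factorial `(x)_{n,l} = x(x-l)(x-2l)...(x-(n-1)l)`. -/
noncomputable def dFall (l x : ℝ) (n : ℕ) : ℝ := ∏ i ∈ Finset.range n, (x - i * l)

/-- The degenerate exponential `e_l^x(t) = (1 + l t)^(x/l)`. -/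
noncomputable def degExp (l x t : ℝ) : ℝ := (1 + l * t) ^ (x / l)

/-!
Since `(x)_{m,λ} / m! = λ^m (x/λ choose m)`, the binomial series gives
`∑_m (x)_{m,λ} t^m / m! = e_λ^x(t)` for `|λt| < 1`. Summing the double series
`∑_{k,m} (k)_{m,λ} t^m / (k! m!)` first over `m` gives `∑_k e_λ(t)^k / k! = exp (e_λ(t))`;
summing it first over `k` gives `∑_m (∑_k (k)_{m,λ} / k!) t^m / m!`. The double series converges
absolutely, being dominated termwise by the same series for `(-|λ|, |t|)`. Comparing coefficients
with `exp (e_λ(t) - 1) = ∑_m φ_{m,λ} t^m / m!` gives the claim.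
-/

open Finset Topology

theorem Ring.choose_eq_prod_range_div {R : Type*} [Field R] [CharZero R] (a : R) (n : ℕ) :
    Ring.choose a n = (∏ j ∈ range n, (a - j)) / n.factorial := by
  rw [Ring.choose_eq_smul, ← descPochhammer_eval_eq_prod_range, smul_eq_mul, inv_mul_eq_div,
    ← Polynomial.aeval_eq_smeval, Polynomial.aeval_def, Polynomial.eval₂_eq_eval_map,
    descPochhammer_map]

theorem Real.hasSum_choose_mul_pow (a : ℝ) {x : ℝ} (hx : |x| < 1) :
    HasSum (fun n => Ring.choose a n * x ^ n) ((1 + x) ^ a) := by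
  have := (Real.one_add_rpow_hasFPowerSeriesOnBall_zero (a := a)).hasSum (y := x)
    (by simpa [enorm_eq_nnnorm, ← NNReal.coe_lt_coe] using hx)
  simpa [binomialSeries, mul_comm] using this

theorem coeffs_eq_of_eventually_hasSum_mul_pow {𝕜 : Type*} [NontriviallyNormedField 𝕜]
    {a b : ℕ → 𝕜} {f : 𝕜 → 𝕜} (ha : ∀ᶠ t in 𝓝 0, HasSum (fun n => a n * t ^ n) (f t))
    (hb : ∀ᶠ t in 𝓝 0, HasSum (fun n => b n * t ^ n) (f t)) : a = b := by
  have hseries : ∀ c : ℕ → 𝕜, (∀ᶠ t in 𝓝 0, HasSum (fun n => c n * t ^ n) (f t)) →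
      HasFPowerSeriesAt f (FormalMultilinearSeries.ofScalars 𝕜 c) 0 := fun c hc => by
    simpa [hasFPowerSeriesAt_iff, mul_comm] using hc
  exact FormalMultilinearSeries.ofScalars_series_injective 𝕜 𝕜
    ((hseries a ha).eq_formalMultilinearSeries (hseries b hb))

theorem dFall_eq_pow_mul_prod {l : ℝ} (hl : l ≠ 0) (x : ℝ) (n : ℕ) :
    dFall l x n = l ^ n * ∏ j ∈ range n, (x / l - j) := by
  rw [dFall, show l ^ n = ∏ _j ∈ range n, l by simp, ← prod_mul_distrib]
  exact prod_congr rfl fun i _ => by field_simp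

theorem dFall_mul_pow_div_factorial {l : ℝ} (hl : l ≠ 0) (x t : ℝ) (n : ℕ) :
    dFall l x n * t ^ n / n.factorial = Ring.choose (x / l) n * (l * t) ^ n := by
  rw [Ring.choose_eq_prod_range_div, dFall_eq_pow_mul_prod hl]
  ring

theorem abs_dFall_le (l x : ℝ) (n : ℕ) : |dFall l x n| ≤ dFall (-|l|) |x| n := by
  rw [dFall, dFall, abs_prod]
  refine prod_le_prod (fun _ _ => abs_nonneg _) fun i _ => ?_
  calc |x - i * l| ≤ |x| + |i * l| := abs_sub _ _
    _ = |x| - i * -|l| := by rw [abs_mul, Nat.abs_cast]; ring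

theorem hasSum_dFall_mul_pow_div_factorial {l : ℝ} (hl : l ≠ 0) (x : ℝ) {t : ℝ}
    (ht : |l * t| < 1) :
    HasSum (fun n => dFall l x n * t ^ n / n.factorial) (degExp l x t) := by
  simpa only [dFall_mul_pow_div_factorial hl, degExp] using Real.hasSum_choose_mul_pow (x / l) ht

theorem degExp_natCast {l t : ℝ} (h : 0 < 1 + l * t) (k : ℕ) :
    degExp l k t = degExp l 1 t ^ k := by
  rw [degExp, degExp, ← Real.rpow_natCast, ← Real.rpow_mul h.le]
  ring_nf

theorem hasSum_dFall_natCast_mul_pow_div_factorial {l : ℝ} (hl : l ≠ 0) {t : ℝ}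
    (ht : |l * t| < 1) (k : ℕ) :
    HasSum (fun m => dFall l k m * t ^ m / m.factorial / k.factorial)
      (degExp l 1 t ^ k / k.factorial) := by
  have hpos : 0 < 1 + l * t := by linarith [neg_abs_le (l * t)]
  rw [← degExp_natCast hpos]
  exact (hasSum_dFall_mul_pow_div_factorial hl k ht).div_const _

theorem summable_dFall_mul_pow_div_factorial_prod {l : ℝ} (hl : l ≠ 0) {t : ℝ}
    (ht : |l * t| < 1) :
    Summable fun p : ℕ × ℕ => dFall l p.1 p.2 * t ^ p.2 / p.2.factorial / p.1.factorial := by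
  have ht' : |(-|l|) * (|t|)| < 1 := by rwa [neg_mul, abs_neg, ← abs_mul, abs_abs]
  have hmajorant : Summable fun p : ℕ × ℕ =>
      dFall (-|l|) p.1 p.2 * |t| ^ p.2 / p.2.factorial / p.1.factorial := by
    have hrow := hasSum_dFall_natCast_mul_pow_div_factorial (by simpa using hl) ht'
    refine (summable_prod_of_nonneg fun p => ?_).2
      ⟨fun k => (hrow k).summable, ?_⟩
    · have := (abs_nonneg _).trans (abs_dFall_le l p.1 p.2)
      rw [Nat.abs_cast] at this
      positivity
    · simpa only [(hrow _).tsum_eq] using Real.summable_pow_div_factorial _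
  refine hmajorant.of_norm_bounded fun p => ?_
  rw [Real.norm_eq_abs, abs_div, abs_div, abs_mul, abs_pow, Nat.abs_cast, Nat.abs_cast]
  gcongr
  simpa only [Nat.abs_cast] using abs_dFall_le l p.1 p.2

theorem summable_dFall_div_factorial {l : ℝ} (hl : l ≠ 0) (n : ℕ) :
    Summable fun k : ℕ => dFall l k n / k.factorial := by
  have ht : |l * (2 * l)⁻¹| < 1 := by
    rw [mul_inv, ← mul_assoc, mul_comm l, mul_assoc, mul_inv_cancel₀ hl]
    norm_num
  have hcol := ((summable_dFall_mul_pow_div_factorial_prod hl ht).comp_injective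
    Prod.swap_injective).prod_factor n
  have hc : (2 * l)⁻¹ ^ n / n.factorial ≠ 0 := by
    have := Nat.factorial_ne_zero n
    simpa [hl]
  refine (summable_mul_right_iff hc).1 (hcol.congr fun k => ?_)
  simp only [Function.comp_apply, Prod.swap_prod_mk]
  ring

theorem hasSum_tsum_dFall_div_factorial_mul_pow {l : ℝ} (hl : l ≠ 0) {t : ℝ}
    (ht : |l * t| < 1) :
    HasSum (fun m => (∑' k : ℕ, dFall l k m / k.factorial) * (t ^ m / m.factorial))
      (Real.exp (degExp l 1 t)) := by
  set F : ℕ × ℕ → ℝ := fun p => dFall l p.1 p.2 * t ^ p.2 / p.2.factorial / p.1.factorial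
  have hexp : HasSum (fun k : ℕ => degExp l 1 t ^ k / k.factorial) (Real.exp (degExp l 1 t)) := by
    rw [Real.exp_eq_exp_ℝ]
    exact NormedSpace.expSeries_div_hasSum_exp _
  have hrows := hasSum_dFall_natCast_mul_pow_div_factorial hl ht
  have htotal : HasSum F (Real.exp (degExp l 1 t)) := by
    have hF := (summable_dFall_mul_pow_div_factorial_prod hl ht).hasSum
    rwa [hexp.unique (hF.prod_fiberwise hrows)]
  have hcols : ∀ m, HasSum (fun k => F (k, m))
      ((∑' k : ℕ, dFall l k m / k.factorial) * (t ^ m / m.factorial)) := fun m =>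
    ((summable_dFall_div_factorial hl m).hasSum.mul_right _).congr_fun fun k => by
      simp only [F]
      ring
  exact ((Equiv.prodComm ℕ ℕ).hasSum_iff.2 htotal).prod_fiberwise hcols

theorem degenerate_bell_numbers_dobinski (l : ℝ) (hl : l ≠ 0)
    (φ : ℕ → ℝ → ℝ)
    (hφ : ∀ x t : ℝ, |l * t| < 1 →
      HasSum (fun n : ℕ => φ n x * t ^ n / (n.factorial : ℝ))
        (Real.exp (x * (degExp l 1 t - 1))))
    (n : ℕ) :
    HasSum (fun k : ℕ => dFall l (k : ℝ) n / (k.factorial : ℝ))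
      (Real.exp 1 * φ n 1) := by
  set S : ℕ → ℝ := fun m => ∑' k : ℕ, dFall l k m / k.factorial
  have hnhds : ∀ᶠ t in 𝓝 (0 : ℝ), |l * t| < 1 :=
    (continuous_const.mul continuous_id).abs.continuousAt.eventually_lt continuousAt_const
      (by simp)
  have hcoeff := coeffs_eq_of_eventually_hasSum_mul_pow
    (a := fun m => φ m 1 / m.factorial) (b := fun m => (Real.exp 1)⁻¹ * S m / m.factorial)
    (hnhds.mono fun t ht => (hφ 1 t ht).congr_fun fun m => by ring)
    (hnhds.mono fun t ht => by
      have := (hasSum_tsum_dFall_div_factorial_mul_pow hl ht).mul_left (Real.exp 1)⁻¹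
      rw [one_mul, Real.exp_sub, div_eq_inv_mul]
      exact this.congr_fun fun m => by ring)
  have hφS : φ n 1 = (Real.exp 1)⁻¹ * S n :=
    (div_left_inj' (by exact_mod_cast n.factorial_ne_zero)).1 (congrFun hcoeff n)
  rw [hφS, mul_inv_cancel_left₀ (Real.exp_ne_zero 1)]
  exact (summable_dFall_div_factorial hl n).hasSum
end

section
/- If X and Y are independent with X ∼ DB_λ(α₁,θ) and Y ∼ DB_λ(α₂,θ), then for every k ≥ 0, P{X+Y=k} = e^{-(α₁+α₂)(e_λ(θ)-1)} (θ^k/k!) φ_{k,λ}(α₁+α₂). In particular X+Y ∼ DB_λ(α₁+α₂, θ). -/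
/-! The exponential generating function `∑ φ_n(x) tⁿ / n! = exp (x (e_l(t) - 1))` is
multiplicative in `x`, so comparing coefficients of a Cauchy product near `t = 0` gives the
binomial identity for `φ_n / n!`. By independence `P{X + Y = k}` is the convolution of the two
pmfs, which that identity turns into the pmf of `DB_l(α₁ + α₂, θ)`. The given pmf values are
nonnegative since they sum to `1` while their positive parts, the probabilities, sum to `1` too. -/

open Real MeasureTheory ProbabilityTheory Filter Asymptotics

open Finset FormalMultilinearSeries

section PowerSeries

variable {a b c : ℕ → ℝ} {f g : ℝ → ℝ} {r t : ℝ}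

lemma le_radius_ofScalars (h : ∀ t, |t| < r → Summable fun n => a n * t ^ n) :
    ENNReal.ofReal r ≤ (ofScalars ℝ a).radius := by
  refine ENNReal.le_of_forall_nnreal_lt fun s hs => ?_
  have hsr : |(s : ℝ)| < r := by
    rw [NNReal.abs_eq]; exact ENNReal.coe_lt_ofReal.1 hs
  refine (ofScalars ℝ a).le_radius_of_tendsto (l := 0) ?_
  simpa [ofScalars_norm] using (h s hsr).tendsto_atTop_zero.norm

lemma summable_norm_mul_pow_of_abs_lt (h : ∀ t, |t| < r → Summable fun n => a n * t ^ n)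
    (ht : |t| < r) : Summable fun n => ‖a n * t ^ n‖ := by
  have hlt : (‖t‖₊ : ENNReal) < (ofScalars ℝ a).radius :=
    (ENNReal.coe_lt_ofReal.2 (by rwa [coe_nnnorm, Real.norm_eq_abs])).trans_le
      (le_radius_ofScalars h)
  simpa [ofScalars_norm, norm_mul, norm_pow] using (ofScalars ℝ a).summable_norm_mul_pow hlt

lemma hasFPowerSeriesOnBall_ofScalars (hr : 0 < r)
    (h : ∀ t, |t| < r → HasSum (fun n => a n * t ^ n) (f t)) :
    HasFPowerSeriesOnBall f (ofScalars ℝ a) 0 (ENNReal.ofReal r) where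
  r_le := le_radius_ofScalars fun t ht => (h t ht).summable
  r_pos := ENNReal.ofReal_pos.2 hr
  hasSum {y} hy := by
    rw [Metric.mem_eball, edist_zero_right, ← ofReal_norm, ENNReal.ofReal_lt_ofReal_iff hr,
      Real.norm_eq_abs] at hy
    simpa [ofScalars_apply_eq, mul_comm] using h y hy

lemma eq_of_hasSum_mul_pow (hr : 0 < r)
    (ha : ∀ t, |t| < r → HasSum (fun n => a n * t ^ n) (f t))
    (hb : ∀ t, |t| < r → HasSum (fun n => b n * t ^ n) (f t)) : a = b :=
  ofScalars_series_injective ℝ ℝ <|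
    (hasFPowerSeriesOnBall_ofScalars hr ha).hasFPowerSeriesAt.eq_formalMultilinearSeries
      (hasFPowerSeriesOnBall_ofScalars hr hb).hasFPowerSeriesAt

lemma eq_sum_antidiagonal_of_hasSum_mul_pow (hr : 0 < r)
    (ha : ∀ t, |t| < r → HasSum (fun n => a n * t ^ n) (f t))
    (hb : ∀ t, |t| < r → HasSum (fun n => b n * t ^ n) (g t))
    (hc : ∀ t, |t| < r → HasSum (fun n => c n * t ^ n) (f t * g t)) (n : ℕ) :
    c n = ∑ p ∈ antidiagonal n, a p.1 * b p.2 := by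
  refine congrFun (eq_of_hasSum_mul_pow (b := fun n => ∑ p ∈ antidiagonal n, a p.1 * b p.2)
    hr hc fun t ht => ?_) n
  have hfa := summable_norm_mul_pow_of_abs_lt (fun t ht => (ha t ht).summable) ht
  have hgb := summable_norm_mul_pow_of_abs_lt (fun t ht => (hb t ht).summable) ht
  have hcauchy := (summable_norm_sum_mul_antidiagonal_of_summable_norm hfa hgb).of_norm.hasSum
  rw [← tsum_mul_tsum_eq_tsum_sum_antidiagonal_of_summable_norm hfa hgb,
    (ha t ht).tsum_eq, (hb t ht).tsum_eq] at hcauchy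
  refine hcauchy.congr_fun fun m => ?_
  rw [sum_mul]
  refine sum_congr rfl fun p hp => ?_
  rw [← mem_antidiagonal.1 hp, pow_add]
  ring

end PowerSeries

lemma div_factorial_add_eq_sum_antidiagonal {φ : ℕ → ℝ → ℝ} {h : ℝ → ℝ} {r : ℝ} (hr : 0 < r)
    (hφ : ∀ x t, |t| < r → HasSum (fun n => φ n x / (n.factorial : ℝ) * t ^ n) (exp (x * h t)))
    (x y : ℝ) (n : ℕ) :
    φ n (x + y) / (n.factorial : ℝ) =
      ∑ p ∈ antidiagonal n, φ p.1 x / (p.1.factorial : ℝ) * (φ p.2 y / (p.2.factorial : ℝ)) :=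
  eq_sum_antidiagonal_of_hasSum_mul_pow hr (hφ x) (hφ y)
    (fun t ht => by simpa only [add_mul, exp_add] using hφ (x + y) t ht) n

lemma nonneg_of_hasSum_of_tsum_ofReal {ι : Type*} {p : ι → ℝ} {s : ℝ} (hs : 0 ≤ s)
    (hp : HasSum p s) (h : ∑' i, ENNReal.ofReal (p i) = ENNReal.ofReal s) (i : ι) :
    0 ≤ p i := by
  have hpos : HasSum (fun i => max (p i) 0) s := by
    have := (ENNReal.summable_toReal (h ▸ ENNReal.ofReal_ne_top)).hasSum
    rwa [← ENNReal.tsum_toReal_eq fun _ => ENNReal.ofReal_ne_top, h,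
      ENNReal.toReal_ofReal hs] at this
  have hzero : (fun i => max (p i) 0 - p i) = 0 :=
    (hasSum_zero_iff_of_nonneg fun i => sub_nonneg.2 (le_max_left _ _)).1
      (by simpa using hpos.sub hp)
  have hi : max (p i) 0 - p i = 0 := congrFun hzero i
  linarith [le_max_right (p i) 0]

section Probability

variable {Ω : Type*} [MeasurableSpace Ω] {P : Measure Ω} {X Y : Ω → ℕ}

lemma tsum_measure_eq_one [IsProbabilityMeasure P] (hX : Measurable X) :
    ∑' k, P {ω | X ω = k} = 1 := by
  rw [← tsum_univ]
  change ∑' k : (Set.univ : Set ℕ), P (X ⁻¹' {(k : ℕ)}) = 1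
  rw [tsum_measure_preimage_singleton Set.countable_univ
    fun k _ => hX (measurableSet_singleton k)]
  simp

lemma nonneg_of_measure_eq_ofReal [IsProbabilityMeasure P] (hX : Measurable X) {p : ℕ → ℝ}
    (hp : HasSum p 1) (hXp : ∀ k, P {ω | X ω = k} = ENNReal.ofReal (p k)) (k : ℕ) : 0 ≤ p k :=
  nonneg_of_hasSum_of_tsum_ofReal zero_le_one hp
    (by simpa [hXp] using tsum_measure_eq_one (P := P) hX) k

lemma measure_add_eq_sum_antidiagonal (hX : Measurable X) (hY : Measurable Y)
    (hXY : IndepFun X Y P) (k : ℕ) :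
    P {ω | X ω + Y ω = k} = ∑ p ∈ antidiagonal k, P {ω | X ω = p.1} * P {ω | Y ω = p.2} := by
  have hset : {ω | X ω + Y ω = k} = (fun ω => (X ω, Y ω)) ⁻¹' ↑(antidiagonal k) := by
    ext; simp
  rw [hset, ← sum_measure_preimage_singleton _ fun p _ =>
    (hX.prodMk hY) (measurableSet_singleton p)]
  refine sum_congr rfl fun p _ => ?_
  have hfiber : (fun ω => (X ω, Y ω)) ⁻¹' {p} = X ⁻¹' {p.1} ∩ Y ⁻¹' {p.2} := by
    ext; simp [Prod.ext_iff]
  rw [hfiber, hXY.measure_inter_preimage_eq_mul _ _ (measurableSet_singleton _)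
    (measurableSet_singleton _)]
  rfl

lemma measure_add_eq_ofReal_sum_antidiagonal [IsProbabilityMeasure P] (hX : Measurable X)
    (hY : Measurable Y) (hXY : IndepFun X Y P) {p q : ℕ → ℝ} (hp : HasSum p 1)
    (hq : HasSum q 1) (hXp : ∀ k, P {ω | X ω = k} = ENNReal.ofReal (p k))
    (hYq : ∀ k, P {ω | Y ω = k} = ENNReal.ofReal (q k)) (k : ℕ) :
    P {ω | X ω + Y ω = k} = ENNReal.ofReal (∑ i ∈ antidiagonal k, p i.1 * q i.2) := by
  have hp₀ := nonneg_of_measure_eq_ofReal hX hp hXp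
  have hq₀ := nonneg_of_measure_eq_ofReal hY hq hYq
  rw [measure_add_eq_sum_antidiagonal hX hY hXY,
    ENNReal.ofReal_sum_of_nonneg fun i _ => mul_nonneg (hp₀ _) (hq₀ _)]
  simp only [hXp, hYq, ENNReal.ofReal_mul (hp₀ _)]

end Probability

/-- The probability of `k` under the degenerate Bell distribution `DB_l(α, θ)`. -/
noncomputable def degBellProb (φ : ℕ → ℝ → ℝ) (l α θ : ℝ) (k : ℕ) : ℝ :=
  exp (-(α * (degExp l 1 θ - 1))) * θ ^ k * φ k α / (k.factorial : ℝ)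

section DegenerateBell

variable {φ : ℕ → ℝ → ℝ} {l α α₁ α₂ θ : ℝ}

lemma hasSum_degBellProb
    (hφ : HasSum (fun n => φ n α * θ ^ n / (n.factorial : ℝ)) (exp (α * (degExp l 1 θ - 1)))) :
    HasSum (degBellProb φ l α θ) 1 := by
  have := hφ.mul_left (exp (-(α * (degExp l 1 θ - 1))))
  rw [← exp_add, neg_add_cancel, exp_zero] at this
  exact this.congr_fun fun k => by unfold degBellProb; ring

lemma sum_antidiagonal_degBellProb
    (hadd : ∀ n, φ n (α₁ + α₂) / (n.factorial : ℝ) = ∑ p ∈ antidiagonal n,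
      φ p.1 α₁ / (p.1.factorial : ℝ) * (φ p.2 α₂ / (p.2.factorial : ℝ))) (k : ℕ) :
    ∑ p ∈ antidiagonal k, degBellProb φ l α₁ θ p.1 * degBellProb φ l α₂ θ p.2 =
      degBellProb φ l (α₁ + α₂) θ k := by
  rw [degBellProb, mul_div_assoc, hadd, mul_sum]
  refine sum_congr rfl fun p hp => ?_
  rw [← mem_antidiagonal.1 hp, degBellProb, degBellProb, add_mul, neg_add, exp_add, pow_add]
  ring

end DegenerateBell

theorem degenerate_bell_sum_of_two_general (l α₁ α₂ θ : ℝ) (hl : l ∈ Set.Ioc (0 : ℝ) 1)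
    (hθ : 0 < θ)
    (φ : ℕ → ℝ → ℝ)
    (hφ : ∀ x t : ℝ, 0 < 1 + l * t →
      HasSum (fun n : ℕ => φ n x * t ^ n / (n.factorial : ℝ))
        (Real.exp (x * (degExp l 1 t - 1))))
    {Ω : Type*} [MeasurableSpace Ω] (P : Measure Ω) [IsProbabilityMeasure P]
    (X Y : Ω → ℕ) (hXmeas : Measurable X) (hYmeas : Measurable Y)
    (hindep : IndepFun X Y P)
    (hX : ∀ k : ℕ, P {ω | X ω = k} =
      ENNReal.ofReal (Real.exp (-(α₁ * (degExp l 1 θ - 1))) * θ ^ k * φ k α₁ / (k.factorial : ℝ)))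
    (hY : ∀ k : ℕ, P {ω | Y ω = k} =
      ENNReal.ofReal (Real.exp (-(α₂ * (degExp l 1 θ - 1))) * θ ^ k * φ k α₂ / (k.factorial : ℝ))) :
    ∀ k : ℕ, P {ω | X ω + Y ω = k} =
      ENNReal.ofReal (Real.exp (-((α₁ + α₂) * (degExp l 1 θ - 1))) * θ ^ k *
        φ k (α₁ + α₂) / (k.factorial : ℝ)) := by
  obtain ⟨hl, -⟩ := hl
  have hegf : ∀ x t, |t| < 1 / l → HasSum (fun n => φ n x / (n.factorial : ℝ) * t ^ n)
      (exp (x * (degExp l 1 t - 1))) := fun x t ht => by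
    have : l * -t < 1 := (lt_div_iff₀' hl).1 ((neg_le_abs t).trans_lt ht)
    simpa only [div_mul_eq_mul_div] using hφ x t (by linarith)
  have hθl : 0 < 1 + l * θ := by positivity
  intro k
  rw [measure_add_eq_ofReal_sum_antidiagonal hXmeas hYmeas hindep
    (hasSum_degBellProb (hφ α₁ θ hθl)) (hasSum_degBellProb (hφ α₂ θ hθl)) hX hY,
    sum_antidiagonal_degBellProb
      (div_factorial_add_eq_sum_antidiagonal (one_div_pos.2 hl) hegf _ _)]
  rfl

theorem degenerate_bell_sum_of_two (l α₁ α₂ θ : ℝ) (hl : l ∈ Set.Ioc (0 : ℝ) 1)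
    (hα₁ : 0 < α₁) (hα₂ : 0 < α₂) (hθ : 0 < θ)
    (φ : ℕ → ℝ → ℝ)
    (hφ : ∀ x t : ℝ, 0 < 1 + l * t →
      HasSum (fun n : ℕ => φ n x * t ^ n / (n.factorial : ℝ))
        (Real.exp (x * (degExp l 1 t - 1))))
    {Ω : Type*} [MeasurableSpace Ω] (P : Measure Ω) [IsProbabilityMeasure P]
    (X Y : Ω → ℕ) (hXmeas : Measurable X) (hYmeas : Measurable Y)
    (hindep : IndepFun X Y P)
    (hX : ∀ k : ℕ, P {ω | X ω = k} =
      ENNReal.ofReal (Real.exp (-(α₁ * (degExp l 1 θ - 1))) * θ ^ k * φ k α₁ / (k.factorial : ℝ)))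
    (hY : ∀ k : ℕ, P {ω | Y ω = k} =
      ENNReal.ofReal (Real.exp (-(α₂ * (degExp l 1 θ - 1))) * θ ^ k * φ k α₂ / (k.factorial : ℝ))) :
    ∀ k : ℕ, P {ω | X ω + Y ω = k} =
      ENNReal.ofReal (Real.exp (-((α₁ + α₂) * (degExp l 1 θ - 1))) * θ ^ k *
        φ k (α₁ + α₂) / (k.factorial : ℝ)) :=
  degenerate_bell_sum_of_two_general l α₁ α₂ θ hl hθ φ hφ P X Y hXmeas hYmeas hindep hX hY
end

section
/- If X ∼ DB_λ(α,θ), then E[X²] = θα(1 + θ(1−λ)e_λ^{−λ}(θ)) e_λ^{1−λ}(θ) + θ²α² e_λ^{2(1−λ)}(θ), where e_λ^x(θ) = (1+λθ)^{x/λ}. -/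
/-!
Put `a n = φ n α / n!`. The series `∑ a n tⁿ` sums to `F t = exp (α (e_λ(t) - 1))` for every
`t > -1/λ`, in particular for all `t ≥ 0`, so it converges absolutely on all of `ℝ` and can be
differentiated termwise: `∑ n a n tⁿ = t F'(t)` and `∑ n² a n θⁿ = θ (t F'(t))'(θ)`, where
`F' = α e_λ^{1-λ} F`. The law of `X` is `a k θᵏ / F θ`, so `E[X²] = θ (F'(θ) + θ F''(θ)) / F(θ)`,
and `e_λ^x e_λ^y = e_λ^{x+y}` puts this in the stated form. Since `P {X = k}` is given through
`ENNReal.ofReal`, which clips negative values, one first checks that the numbers `a k θᵏ / F θ`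
are nonnegative: they sum to `1` both as reals and as measures.
-/

open Real MeasureTheory ProbabilityTheory Filter Asymptotics

open Topology

section PowerSeries

variable {a : ℕ → ℝ}

theorem summable_mul_pow_of_summable_nonneg
    (ha : ∀ r : ℝ, 0 ≤ r → Summable fun n => a n * r ^ n) (r : ℝ) :
    Summable fun n => a n * r ^ n :=
  ((ha |r| (abs_nonneg r)).abs.congr fun n => by simp [abs_mul]).of_abs

theorem summable_natCast_mul_mul_pow (ha : ∀ r : ℝ, Summable fun n => a n * r ^ n) (r : ℝ) :
    Summable fun n : ℕ => (n : ℝ) * a n * r ^ n := by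
  set T := |r| + 1
  have hT : 0 < T := by positivity
  obtain ⟨C, hC⟩ := ((ha T).tendsto_atTop_zero.norm.bddAbove_range)
  have hq : ‖|r| / T‖ < 1 := by
    rw [norm_of_nonneg (by positivity), div_lt_one hT]; linarith
  refine Summable.of_norm_bounded
    ((summable_pow_mul_geometric_of_norm_lt_one 1 hq).mul_left C) fun n => ?_
  have hn : ‖a n * T ^ n‖ ≤ C := by simpa using hC (Set.mem_range_self n)
  calc ‖(n : ℝ) * a n * r ^ n‖ = ‖a n * T ^ n‖ * ((n : ℝ) ^ 1 * (|r| / T) ^ n) := by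
        simp only [div_pow, norm_mul, norm_pow, norm_of_nonneg hT.le, Real.norm_eq_abs,
          Nat.abs_cast]
        field_simp
    _ ≤ C * ((n : ℝ) ^ 1 * (|r| / T) ^ n) := by gcongr

theorem hasDerivAt_tsum_mul_pow (ha : ∀ r : ℝ, Summable fun n => a n * r ^ n) (y : ℝ) :
    HasDerivAt (fun t => ∑' n, a n * t ^ n) (∑' n : ℕ, (n : ℝ) * a n * y ^ (n - 1)) y := by
  set R := |y| + 1
  have hR : 1 ≤ R := by simp [R]
  have hyR : y ∈ Set.Ioo (-R) R := abs_lt.1 (by simp [R])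
  refine hasDerivAt_tsum_of_isPreconnected (g := fun n z => a n * z ^ n)
    (g' := fun n z => (n : ℝ) * a n * z ^ (n - 1)) (summable_natCast_mul_mul_pow ha R).norm
    isOpen_Ioo isPreconnected_Ioo (fun n z _ => ?_) (fun n z hz => ?_) hyR (ha y) hyR
  · exact ((hasDerivAt_pow n z).const_mul (a n)).congr_deriv (by ring)
  · have hz' : |z| ≤ R := abs_le.2 ⟨hz.1.le, hz.2.le⟩
    have : |z| ^ (n - 1) ≤ R ^ n :=
      (pow_le_pow_left₀ (abs_nonneg z) hz' _).trans (pow_le_pow_right₀ hR (n.sub_le 1))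
    rw [norm_mul, norm_mul, norm_mul, norm_mul, norm_pow, norm_pow, Real.norm_natCast,
      Real.norm_of_nonneg (by linarith : 0 ≤ R), Real.norm_eq_abs]
    exact mul_le_mul_of_nonneg_left this (by positivity)

theorem tsum_natCast_mul_mul_pow_eq_mul (ha : ∀ r : ℝ, Summable fun n => a n * r ^ n)
    {f : ℝ → ℝ} {f' y : ℝ} (hf : (fun t => ∑' n, a n * t ^ n) =ᶠ[𝓝 y] f)
    (hd : HasDerivAt f f' y) :
    ∑' n : ℕ, (n : ℝ) * a n * y ^ n = y * f' := by
  rw [← (hf.hasDerivAt_iff.1 (hasDerivAt_tsum_mul_pow ha y)).unique hd, ← tsum_mul_left]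
  refine tsum_congr fun n => ?_
  rcases n with _ | n
  · simp
  · rw [Nat.add_sub_cancel, pow_succ]; ring

end PowerSeries

section DegExp

variable {l t : ℝ}

theorem degExp_add (ht : 0 < 1 + l * t) (x y : ℝ) :
    degExp l (x + y) t = degExp l x t * degExp l y t := by
  rw [degExp, degExp, degExp, add_div, rpow_add ht]

theorem hasDerivAt_degExp (hl : l ≠ 0) (ht : 0 < 1 + l * t) (x : ℝ) :
    HasDerivAt (degExp l x) (x * degExp l (x - l) t) t := by
  have hlin : HasDerivAt (fun t => 1 + l * t) l t := by
    simpa using ((hasDerivAt_id t).const_mul l).const_add 1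
  have hderiv : x * degExp l (x - l) t = l * (x / l) * (1 + l * t) ^ (x / l - 1) := by
    rw [degExp, sub_div, div_self hl]
    field_simp
  rw [hderiv]
  exact hlin.rpow_const (Or.inl ht.ne')

theorem hasDerivAt_exp_mul_degExp_sub_one (hl : l ≠ 0) (ht : 0 < 1 + l * t) (α : ℝ) :
    HasDerivAt (fun t => exp (α * (degExp l 1 t - 1)))
      (α * degExp l (1 - l) t * exp (α * (degExp l 1 t - 1))) t := by
  convert (((hasDerivAt_degExp hl ht 1).sub_const 1).const_mul α).exp using 1
  ring

end DegExp

theorem nonneg_of_tsum_ofReal_eq_ofReal_tsum {ι : Type*} {f : ι → ℝ} (hf : Summable f)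
    (h₀ : 0 ≤ ∑' i, f i) (h : ∑' i, ENNReal.ofReal (f i) = ENNReal.ofReal (∑' i, f i)) (i : ι) :
    0 ≤ f i := by
  have hpos : Summable fun i => max (f i) 0 :=
    hf.abs.of_nonneg_of_le (fun _ => le_max_right _ _)
      fun _ => max_le (le_abs_self _) (abs_nonneg _)
  have hsum : ∑' i, max (f i) 0 = ∑' i, f i := by
    rw [← ENNReal.ofReal_eq_ofReal_iff (tsum_nonneg fun _ => le_max_right _ _) h₀, ← h,
      ENNReal.ofReal_tsum_of_nonneg (fun _ => le_max_right _ _) hpos]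
    simp [ENNReal.ofReal_max]
  by_contra! hi
  have := hf.tsum_lt_tsum (i := i) (fun j => le_max_left _ _) (by simpa using hi) hpos
  linarith

section Discrete

variable {Ω α : Type*} [MeasurableSpace Ω] [MeasurableSpace α] [Countable α]
  [MeasurableSingletonClass α] {P : Measure Ω} {X : Ω → α}

theorem measureReal_preimage_singleton_eq_of_eq_ofReal [IsProbabilityMeasure P] (hX : Measurable X)
    {p : α → ℝ} (hp : Summable p) (hp₁ : ∑' k, p k = 1)
    (hP : ∀ k, P (X ⁻¹' {k}) = ENNReal.ofReal (p k)) (k : α) :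
    P.real (X ⁻¹' {k}) = p k := by
  have hmass : ∑' k, ENNReal.ofReal (p k) = ENNReal.ofReal (∑' k, p k) := by
    have := Measure.isProbabilityMeasure_map (μ := P) hX.aemeasurable
    rw [hp₁, ENNReal.ofReal_one, ← measure_univ (μ := P.map X), ← (P.map X).sum_smul_dirac]
    simp [Measure.map_apply hX (measurableSet_singleton _), hP]
  rw [measureReal_def, hP, ENNReal.toReal_ofReal
    (nonneg_of_tsum_ofReal_eq_ofReal_tsum hp (hp₁ ▸ zero_le_one) hmass k)]

theorem integral_comp_eq_tsum_measureReal_smul {E : Type*} [NormedAddCommGroup E]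
    [NormedSpace ℝ E] [CompleteSpace E] [IsFiniteMeasure P] (hX : Measurable X) {g : α → E}
    (hg : Summable fun k => P.real (X ⁻¹' {k}) * ‖g k‖) :
    ∫ ω, g (X ω) ∂P = ∑' k, P.real (X ⁻¹' {k}) • g k := by
  rw [← integral_map hX.aemeasurable .of_discrete, ← (P.map X).sum_smul_dirac,
    integral_sum_dirac_eq_tsum (fun _ => measure_ne_top _ _)]
  · simp [Measure.map_apply hX (measurableSet_singleton _), measureReal_def]
  · simpa [Measure.map_apply hX (measurableSet_singleton _), measureReal_def] using hg

end Discrete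

section DegBell

variable {l α θ : ℝ} {a : ℕ → ℝ}

theorem hasSum_natCast_mul_natCast_mul_mul_pow (hl : 0 < l)
    (ha : ∀ t, 0 < 1 + l * t → HasSum (fun n => a n * t ^ n) (exp (α * (degExp l 1 t - 1))))
    (hθ : 0 < 1 + l * θ) :
    HasSum (fun n : ℕ => (n : ℝ) * ((n : ℝ) * a n) * θ ^ n)
      ((θ * α * (1 + θ * (1 - l) * degExp l (-l) θ) * degExp l (1 - l) θ
        + θ ^ 2 * α ^ 2 * degExp l (2 * (1 - l)) θ) * exp (α * (degExp l 1 θ - 1))) := by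
  set F : ℝ → ℝ := fun t => exp (α * (degExp l 1 t - 1))
  have hsum : ∀ r : ℝ, Summable fun n => a n * r ^ n :=
    summable_mul_pow_of_summable_nonneg fun r hr => (ha r (by positivity)).summable
  have hnhds : ∀ t, 0 < 1 + l * t → ∀ᶠ s in 𝓝 t, 0 < 1 + l * s := fun t ht =>
    continuousAt_const.eventually_lt (by fun_prop) ht
  have hfirst : ∀ t, 0 < 1 + l * t →
      ∑' n : ℕ, (n : ℝ) * a n * t ^ n = t * (α * degExp l (1 - l) t * F t) := fun t ht =>
    tsum_natCast_mul_mul_pow_eq_mul hsum ((hnhds t ht).mono fun s hs => (ha s hs).tsum_eq)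
      (hasDerivAt_exp_mul_degExp_sub_one hl.ne' ht α)
  have hderiv := (hasDerivAt_id θ).mul (((hasDerivAt_degExp hl.ne' hθ (1 - l)).const_mul α).mul
    (hasDerivAt_exp_mul_degExp_sub_one hl.ne' hθ α))
  convert (summable_natCast_mul_mul_pow (summable_natCast_mul_mul_pow hsum) θ).hasSum using 1
  rw [tsum_natCast_mul_mul_pow_eq_mul (summable_natCast_mul_mul_pow hsum)
    ((hnhds θ hθ).mono hfirst) hderiv, show 1 - l - l = -l + (1 - l) by ring,
    two_mul, degExp_add hθ, degExp_add hθ]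
  simp only [Pi.mul_apply, id]
  ring

end DegBell

theorem degenerate_bell_second_moment_general (l α θ : ℝ) (hl : l ∈ Set.Ioc (0 : ℝ) 1) (hθ : 0 < θ)
    (φ : ℕ → ℝ → ℝ)
    (hφ : ∀ x t : ℝ, 0 < 1 + l * t →
      HasSum (fun n : ℕ => φ n x * t ^ n / (n.factorial : ℝ))
        (Real.exp (x * (degExp l 1 t - 1))))
    {Ω : Type*} [MeasurableSpace Ω] (P : Measure Ω) [IsProbabilityMeasure P]
    (X : Ω → ℕ) (hXmeas : Measurable X)
    (hX : ∀ k : ℕ, P {ω | X ω = k} =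
      ENNReal.ofReal (Real.exp (-(α * (degExp l 1 θ - 1))) * θ ^ k * φ k α / (k.factorial : ℝ))) :
    ∫ ω, ((X ω : ℝ)) ^ 2 ∂P =
      θ * α * (1 + θ * (1 - l) * degExp l (-l) θ) * degExp l (1 - l) θ
        + θ ^ 2 * α ^ 2 * degExp l (2 * (1 - l)) θ := by
  set a : ℕ → ℝ := fun n => φ n α / n.factorial
  set c := exp (-(α * (degExp l 1 θ - 1)))
  have hlθ : 0 < 1 + l * θ := by have := hl.1; positivity
  have ha : ∀ t, 0 < 1 + l * t → HasSum (fun n => a n * t ^ n) (exp (α * (degExp l 1 t - 1))) :=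
    fun t ht => by simpa only [a, div_mul_eq_mul_div] using hφ α t ht
  have hc : c * exp (α * (degExp l 1 θ - 1)) = 1 := by
    simp only [c, ← exp_add, neg_add_cancel, exp_zero]
  have hpmf : HasSum (fun k : ℕ => c * θ ^ k * φ k α / k.factorial) 1 :=
    hc ▸ ((ha θ hlθ).mul_left c).congr_fun fun k => by ring
  have hmoment := (hasSum_natCast_mul_natCast_mul_mul_pow hl.1 ha hlθ).mul_left c
  have hterm : ∀ k : ℕ, P.real (X ⁻¹' {k}) • ((k : ℝ) ^ 2) = c * (k * (k * a k) * θ ^ k) := by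
    intro k
    rw [measureReal_preimage_singleton_eq_of_eq_ofReal hXmeas hpmf.summable hpmf.tsum_eq hX,
      smul_eq_mul]
    simp only [a]; ring
  rw [integral_comp_eq_tsum_measureReal_smul hXmeas (g := fun k : ℕ => (k : ℝ) ^ 2),
    tsum_congr hterm, hmoment.tsum_eq, mul_left_comm, hc, mul_one]
  refine hmoment.summable.congr fun k => ?_
  rw [← hterm, smul_eq_mul, norm_of_nonneg (by positivity)]

theorem degenerate_bell_second_moment (l α θ : ℝ) (hl : l ∈ Set.Ioc (0 : ℝ) 1) (hα : 0 < α) (hθ : 0 < θ)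
    (φ : ℕ → ℝ → ℝ)
    (hφ : ∀ x t : ℝ, 0 < 1 + l * t →
      HasSum (fun n : ℕ => φ n x * t ^ n / (n.factorial : ℝ))
        (Real.exp (x * (degExp l 1 t - 1))))
    {Ω : Type*} [MeasurableSpace Ω] (P : Measure Ω) [IsProbabilityMeasure P]
    (X : Ω → ℕ) (hXmeas : Measurable X)
    (hX : ∀ k : ℕ, P {ω | X ω = k} =
      ENNReal.ofReal (Real.exp (-(α * (degExp l 1 θ - 1))) * θ ^ k * φ k α / (k.factorial : ℝ))) :
    ∫ ω, ((X ω : ℝ)) ^ 2 ∂P =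
      θ * α * (1 + θ * (1 - l) * degExp l (-l) θ) * degExp l (1 - l) θ
        + θ ^ 2 * α ^ 2 * degExp l (2 * (1 - l)) θ :=
  degenerate_bell_second_moment_general l α θ hl hθ φ hφ P X hXmeas hX
end

section
/- If {N_λ(t) | t ≥ 0} is a degenerate Bell process with parameters (α,θ), then for every t > 0 the random variable N_λ(t) has the degenerate Bell distribution DB_λ(αt, θ); that is, P{N_λ(t)=k} = e^{-αt(e_λ(θ)-1)} θ^k φ_{k,λ}(αt)/k! for all k ≥ 0. -/
open Real MeasureTheory ProbabilityTheory Filter Asymptotics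

/-!
Write `p k s = P(N s = k)`. Independent stationary increments make `p` a convolution semigroup in
`s`, so for `0 ≤ u ≤ 1` the generating function `G u s = ∑ₙ p n s uⁿ` is multiplicative in `s`,
hence `G u s = exp (-s ψ u)`. Expanding `(1 - G u s) / s` as `s → 0⁺` with the prescribed jump rates
`c k = α (1)_{k,λ} θ^k / k!` gives `ψ 0 - ψ u = ∑_{k ≥ 1} c k uᵏ` for `u < 1`.
Rates are limits of probabilities, so `(1)_{k,λ} ≥ 0` for all `k`; this forces `1 / λ` to be an
integer `m`, and then `∑_{k ≥ 1} c k uᵏ = α ((1 + λ θ u)^m - 1) = α (e_λ(θ u) - 1)`. Letting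
`u → 1⁻` (Abel's theorem, `G u 1 → 1`) gives `ψ 0 = α (e_λ(θ) - 1)`. So
`G u t = exp (-α t (e_λ(θ) - 1)) exp (α t (e_λ(θ u) - 1))`, and comparing coefficients in `u` with
the generating function of the degenerate Bell polynomials gives the distribution.
-/

open Finset Topology

theorem eq_mul_of_add_of_nonpos {h : ℝ → ℝ}
    (hadd : ∀ s t, 0 ≤ s → 0 ≤ t → h (s + t) = h s + h t)
    (hnonpos : ∀ t, 0 ≤ t → h t ≤ 0) {t : ℝ} (ht : 0 ≤ t) : h t = t * h 1 := by
  have hnsmul (n : ℕ) {x : ℝ} (hx : 0 ≤ x) : h (n * x) = n * h x := by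
    induction n with
    | zero => simpa using hadd 0 0 le_rfl le_rfl
    | succ n ih =>
      rw [Nat.cast_succ, add_mul, one_mul, hadd _ _ (by positivity) hx, ih, add_mul, one_mul]
  have hnat (b : ℕ) : h b = b * h 1 := by simpa using hnsmul b zero_le_one
  have hanti ⦃x y : ℝ⦄ (hx : 0 ≤ x) (hxy : x ≤ y) : h y ≤ h x := by
    have := hadd x (y - x) hx (by linarith)
    rw [add_sub_cancel] at this
    linarith [hnonpos (y - x) (by linarith)]
  -- With `a = ⌊n t⌋`, monotonicity traps `n h t = h (n t)` between `(a + 1) h 1` and `a h 1`.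
  have hbound (n : ℕ) : n * |h t - t * h 1| ≤ -h 1 := by
    set a := ⌊n * t⌋₊
    have ha : (a : ℝ) ≤ n * t := Nat.floor_le (by positivity)
    have ha' : n * t < (a + 1 : ℕ) := by exact_mod_cast Nat.lt_floor_add_one (n * t)
    have h1 := hanti (by positivity) ha
    have h2 := hanti (by positivity) ha'.le
    rw [hnsmul n ht, hnat] at h1 h2
    push_cast at h2 ha'
    rw [← abs_of_nonneg (Nat.cast_nonneg (α := ℝ) n), ← abs_mul, abs_le]
    constructor <;> nlinarith [hnonpos 1 zero_le_one]
  by_contra hne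
  have hpos : 0 < |h t - t * h 1| := abs_pos.2 (sub_ne_zero.2 hne)
  obtain ⟨n, hn⟩ := exists_nat_gt (-h 1 / |h t - t * h 1|)
  rw [div_lt_iff₀ hpos] at hn
  linarith [hbound n]

theorem eq_exp_mul_log_of_mul {f : ℝ → ℝ}
    (hmul : ∀ s t, 0 ≤ s → 0 ≤ t → f (s + t) = f s * f t)
    (hpos : ∀ t, 0 ≤ t → 0 < f t) (hle : ∀ t, 0 ≤ t → f t ≤ 1) {t : ℝ} (ht : 0 ≤ t) :
    f t = exp (t * log (f 1)) := by
  have hlog := eq_mul_of_add_of_nonpos (h := fun t => log (f t))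
    (fun s t hs ht => by simp only [hmul s t hs ht, log_mul (hpos s hs).ne' (hpos t ht).ne'])
    (fun t ht => log_nonpos (hpos t ht).le (hle t ht)) ht
  rw [← hlog, exp_log (hpos t ht)]

theorem tendsto_one_sub_exp_neg_mul_div (β : ℝ) :
    Tendsto (fun s => (1 - exp (-(β * s))) / s) (𝓝[>] 0) (𝓝 β) := by
  have hderiv : HasDerivAt (fun s => 1 - exp (-(β * s))) β 0 := by
    simpa using (((hasDerivAt_id (0 : ℝ)).const_mul β).neg.exp).const_sub 1
  refine ((hasDerivAt_iff_tendsto_slope.1 hderiv).mono_left (nhdsGT_le_nhdsNE 0)).congr' ?_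
  filter_upwards [self_mem_nhdsWithin] with s hs
  simp [slope_def_field]

theorem tendsto_div_of_isLittleO_sub_mul {f : ℝ → ℝ} {c : ℝ}
    (h : (fun s => f s - s * c) =o[𝓝[>] 0] fun s => s) :
    Tendsto (fun s => f s / s) (𝓝[>] 0) (𝓝 c) := by
  have := h.tendsto_div_nhds_zero.add_const c
  rw [zero_add] at this
  refine this.congr' ?_
  filter_upwards [self_mem_nhdsWithin] with s (hs : 0 < s)
  field_simp
  ring

theorem eq_zero_of_hasSum_mul_pow_eq_zero {d : ℕ → ℝ} {ε : ℝ} (hε : 0 < ε)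
    (h : ∀ u ∈ Set.Ioo 0 ε, HasSum (fun n => d n * u ^ n) 0) : d = 0 := by
  set q := FormalMultilinearSeries.ofScalars ℝ d
  set r : NNReal := (ε / 2).toNNReal
  have hr : (r : ENNReal) ≤ q.radius := by
    have := (h (ε / 2) ⟨by positivity, by linarith⟩).summable.tendsto_atTop_zero.norm
    refine q.le_radius_of_tendsto (l := 0) ?_
    simpa [q, r, abs_of_pos hε, max_eq_left (half_pos hε).le] using this
  have hq : HasFPowerSeriesAt q.sum q 0 :=
    (q.hasFPowerSeriesOnBall (lt_of_lt_of_le (ENNReal.coe_pos.2 (Real.toNNReal_pos.2 (half_pos hε)))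
      hr)).hasFPowerSeriesAt
  have hzero : ∀ᶠ u in 𝓝[>] 0, q.sum u = 0 := by
    filter_upwards [Ioo_mem_nhdsGT hε] with u hu
    have := FormalMultilinearSeries.ofScalars_sum_eq (E := ℝ) d u
    simp only [FormalMultilinearSeries.ofScalarsSum, smul_eq_mul] at this
    rw [this, (h u hu).tsum_eq]
  by_contra hd
  have hq0 : q ≠ 0 := fun h0 => hd (funext fun n =>
    (FormalMultilinearSeries.ofScalars_eq_zero ℝ (c := d) n).1 (show q n = 0 by rw [h0]; rfl))
  obtain ⟨u, hne, hu⟩ :=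
    (((hq.locally_ne_zero hq0).filter_mono (nhdsGT_le_nhdsNE 0)).and hzero).exists
  exact hne hu

theorem dFall_one_eq_pow_mul_choose {l : ℝ} {m : ℕ} (hm : (m : ℝ) * l = 1) (k : ℕ) :
    dFall l 1 k = l ^ k * k.factorial * m.choose k := by
  have h : ∀ i ∈ range k, (1 : ℝ) - i * l = l * (m - i) := fun i _ => by
    rw [← hm]
    ring
  rw [dFall, prod_congr rfl h, prod_mul_distrib, prod_const, card_range,
    ← descPochhammer_eval_eq_prod_range, descPochhammer_eval_eq_descFactorial,
    Nat.descFactorial_eq_factorial_mul_choose, Nat.cast_mul, mul_assoc]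

theorem exists_natCast_mul_eq_one_of_dFall_nonneg {l : ℝ} (hl : 0 < l)
    (h : ∀ k, 0 ≤ dFall l 1 k) : ∃ m : ℕ, (m : ℝ) * l = 1 := by
  by_contra! hne
  set m := ⌊1 / l⌋₊
  have hlt : (m : ℝ) * l < 1 := by
    have := Nat.floor_le (one_div_pos.2 hl).le
    rw [le_div_iff₀ hl] at this
    exact lt_of_le_of_ne this (hne m)
  have hgt : 1 < ((m + 1 : ℕ) : ℝ) * l := by
    have := Nat.lt_floor_add_one (1 / l)
    push_cast
    rwa [div_lt_iff₀ hl] at this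
  -- The first `m + 1` factors `1 - i l` of `dFall l 1 (m + 2)` are positive, the last one negative.
  have hneg : dFall l 1 (m + 2) < 0 := by
    rw [dFall, prod_range_succ]
    refine mul_neg_of_pos_of_neg (prod_pos fun i hi => ?_) (by linarith)
    have : (i : ℝ) ≤ m := by exact_mod_cast Nat.lt_succ_iff.1 (mem_range.1 hi)
    nlinarith
  exact (h _).not_gt hneg

theorem degExp_one_eq_pow {l : ℝ} {m : ℕ} (hm : (m : ℝ) * l = 1) (x : ℝ) :
    degExp l 1 x = (l * x + 1) ^ m := by
  rw [degExp, ← eq_one_div_of_mul_eq_one_left hm, rpow_natCast, add_comm]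

theorem hasSum_dFall_one_mul_pow {l : ℝ} {m : ℕ} (hm : (m : ℝ) * l = 1) (x : ℝ) :
    HasSum (fun k => dFall l 1 k * x ^ k / k.factorial) (degExp l 1 x) := by
  have hterm (k : ℕ) : dFall l 1 k * x ^ k / k.factorial = (l * x) ^ k * m.choose k := by
    rw [dFall_one_eq_pow_mul_choose hm, mul_pow]
    field_simp
  simp only [hterm, degExp_one_eq_pow hm, add_pow, one_pow, mul_one]
  exact hasSum_sum_of_ne_finset_zero fun k hk => by
    rw [Nat.choose_eq_zero_of_lt (by simpa using hk), Nat.cast_zero, mul_zero]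

/-- The rate at which a degenerate Bell process with parameters `(α, θ)` makes jumps of size `k`. -/
noncomputable def bellRate (l α θ : ℝ) (k : ℕ) : ℝ := α * dFall l 1 k * θ ^ k / k.factorial

theorem hasSum_bellRate_succ_mul_pow {l : ℝ} {m : ℕ} (hm : (m : ℝ) * l = 1) (α θ u : ℝ) :
    HasSum (fun k => bellRate l α θ (k + 1) * u ^ (k + 1)) (α * (degExp l 1 (θ * u) - 1)) := by
  have := (hasSum_dFall_one_mul_pow hm (θ * u)).mul_left α
  rw [← hasSum_nat_add_iff' 1] at this
  convert this using 1
  · rfl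
  · ext k
    rw [bellRate, mul_pow]
    ring
  · simp [dFall, mul_sub]

/-- `p k s` stands for the probability that a counting process with independent stationary
increments, started at `0`, is at `k` at time `s`. -/
structure IsConvolutionSemigroup (p : ℕ → ℝ → ℝ) : Prop where
  nonneg : ∀ k s, 0 ≤ p k s
  hasSum_one : ∀ s, HasSum (fun k => p k s) 1
  add : ∀ k {u v}, 0 ≤ u → 0 ≤ v → p k (u + v) = ∑ ij ∈ antidiagonal k, p ij.1 u * p ij.2 v
  zero_zero : p 0 0 = 1

def HasJumpRates (p : ℕ → ℝ → ℝ) (c : ℕ → ℝ) : Prop :=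
  ∀ k, Tendsto (fun s => p (k + 1) s / s) (𝓝[>] 0) (𝓝 (c (k + 1)))

theorem HasJumpRates.tendsto_sum_div {p : ℕ → ℝ → ℝ} {c : ℕ → ℝ} (hc : HasJumpRates p c) (K : ℕ)
    (u : ℝ) : Tendsto (fun s => (∑ k ∈ range K, p (k + 1) s * u ^ (k + 1)) / s) (𝓝[>] 0)
      (𝓝 (∑ k ∈ range K, c (k + 1) * u ^ (k + 1))) := by
  simp_rw [sum_div]
  exact tendsto_finsetSum _ fun k _ => ((hc k).mul_const _).congr fun s => by ring

noncomputable def pgf (p : ℕ → ℝ → ℝ) (u s : ℝ) : ℝ := ∑' n, p n s * u ^ n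

theorem pgf_zero_left (p : ℕ → ℝ → ℝ) (s : ℝ) : pgf p 0 s = p 0 s := by
  rw [pgf, tsum_eq_single 0 fun n hn => by rw [zero_pow hn, mul_zero], pow_zero, mul_one]

namespace IsConvolutionSemigroup

variable {p : ℕ → ℝ → ℝ}

theorem zero_add_eq_mul (hp : IsConvolutionSemigroup p) {u v : ℝ} (hu : 0 ≤ u) (hv : 0 ≤ v) :
    p 0 (u + v) = p 0 u * p 0 v := by
  simpa using hp.add 0 hu hv

theorem zero_natCast_mul_eq_pow (hp : IsConvolutionSemigroup p) (n : ℕ) {x : ℝ} (hx : 0 ≤ x) :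
    p 0 (n * x) = p 0 x ^ n := by
  induction n with
  | zero => simpa using hp.zero_zero
  | succ n ih =>
    rw [Nat.cast_succ, add_one_mul, hp.zero_add_eq_mul (by positivity) hx, ih, pow_succ]

theorem tendsto_zero_one (hp : IsConvolutionSemigroup p) {c : ℝ}
    (hc : Tendsto (fun s => p 1 s / s) (𝓝[>] 0) (𝓝 c)) (hc0 : c ≠ 0) :
    Tendsto (p 0) (𝓝[>] 0) (𝓝 1) := by
  have hc2 : Tendsto (fun s => p 1 (s + s) / (s + s)) (𝓝[>] 0) (𝓝 c) :=
    hc.comp (tendsto_nhdsWithin_of_tendsto_nhds_of_eventually_within _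
      (by simpa using (tendsto_id (x := 𝓝 (0 : ℝ))).add tendsto_id |>.mono_left nhdsWithin_le_nhds)
      (by filter_upwards [self_mem_nhdsWithin] with s (hs : 0 < s) using add_pos hs hs))
  -- `p 1 (2 s) = 2 p 0 s p 1 s`, so `p 0 s` is a ratio of two difference quotients of `p 1`.
  refine (div_self hc0 ▸ hc2.div hc hc0).congr' ?_
  filter_upwards [self_mem_nhdsWithin, hc.eventually_ne hc0] with s (hs : 0 < s) h1
  have h1 : p 1 s ≠ 0 := fun h => h1 (by rw [h, zero_div])
  rw [Pi.div_apply, hp.add 1 hs.le hs.le, Nat.sum_antidiagonal_succ, Nat.antidiagonal_zero,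
    sum_singleton]
  field_simp

theorem zero_pos (hp : IsConvolutionSemigroup p) {c : ℝ}
    (hc : Tendsto (fun s => p 1 s / s) (𝓝[>] 0) (𝓝 c)) (hc0 : c ≠ 0) {s : ℝ} (hs : 0 ≤ s) :
    0 < p 0 s := by
  rcases hs.eq_or_lt with rfl | hs
  · exact hp.zero_zero ▸ one_pos
  have hsn : Tendsto (fun n : ℕ => s / (n + 1)) atTop (𝓝[>] 0) :=
    tendsto_nhdsWithin_of_tendsto_nhds_of_eventually_within _
      (tendsto_const_div_atTop_nhds_zero_nat s |>.comp (tendsto_add_atTop_nat 1) |>.congr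
        fun n => by simp)
      (Eventually.of_forall fun n => div_pos hs n.cast_add_one_pos)
  obtain ⟨n, hn⟩ :=
    ((hp.tendsto_zero_one hc hc0).comp hsn |>.eventually (eventually_gt_nhds one_pos)).exists
  have hsplit : s = ((n + 1 : ℕ) : ℝ) * (s / (n + 1)) := by
    push_cast
    field_simp
  rw [hsplit, hp.zero_natCast_mul_eq_pow _ (by positivity)]
  exact pow_pos hn _

theorem summable_mul_pow (hp : IsConvolutionSemigroup p) (s : ℝ) {u : ℝ} (hu : 0 ≤ u)
    (hu1 : u ≤ 1) : Summable (fun n => p n s * u ^ n) :=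
  (hp.hasSum_one s).summable.of_nonneg_of_le
    (fun n => mul_nonneg (hp.nonneg n s) (pow_nonneg hu n))
    fun n => mul_le_of_le_one_right (hp.nonneg n s) (pow_le_one₀ hu hu1)

theorem pgf_le_one (hp : IsConvolutionSemigroup p) (s : ℝ) {u : ℝ} (hu : 0 ≤ u) (hu1 : u ≤ 1) :
    pgf p u s ≤ 1 :=
  (hp.hasSum_one s).tsum_eq ▸ (hp.summable_mul_pow s hu hu1).tsum_le_tsum
    (fun n => mul_le_of_le_one_right (hp.nonneg n s) (pow_le_one₀ hu hu1))
    (hp.hasSum_one s).summable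

theorem pgf_pos (hp : IsConvolutionSemigroup p) (hp0 : ∀ s, 0 ≤ s → 0 < p 0 s) {s : ℝ}
    (hs : 0 ≤ s) {u : ℝ} (hu : 0 ≤ u) (hu1 : u ≤ 1) : 0 < pgf p u s := by
  have := (hp.summable_mul_pow s hu hu1).le_tsum 0
    fun n _ => mul_nonneg (hp.nonneg n s) (pow_nonneg hu n)
  rw [pow_zero, mul_one] at this
  exact (hp0 s hs).trans_le this

theorem pgf_add (hp : IsConvolutionSemigroup p) {u : ℝ} (hu : 0 ≤ u) (hu1 : u ≤ 1) {v w : ℝ}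
    (hv : 0 ≤ v) (hw : 0 ≤ w) : pgf p u (v + w) = pgf p u v * pgf p u w := by
  have hnorm (s : ℝ) : Summable (fun n => ‖p n s * u ^ n‖) := by
    simpa [abs_of_nonneg (hp.nonneg _ s), abs_of_nonneg hu] using hp.summable_mul_pow s hu hu1
  simp only [pgf]
  rw [tsum_mul_tsum_eq_tsum_sum_antidiagonal_of_summable_norm (hnorm v) (hnorm w)]
  refine tsum_congr fun n => ?_
  rw [hp.add n hv hw, sum_mul]
  refine sum_congr rfl fun ij hij => ?_
  rw [← mem_antidiagonal.1 hij, pow_add]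
  ring

theorem pgf_eq_exp (hp : IsConvolutionSemigroup p) (hp0 : ∀ s, 0 ≤ s → 0 < p 0 s) {u : ℝ}
    (hu : 0 ≤ u) (hu1 : u ≤ 1) {t : ℝ} (ht : 0 ≤ t) : pgf p u t = exp (t * log (pgf p u 1)) :=
  eq_exp_mul_log_of_mul (fun _ _ hv hw => hp.pgf_add hu hu1 hv hw)
    (fun _ hs => hp.pgf_pos hp0 hs hu hu1) (fun s _ => hp.pgf_le_one s hu hu1) ht

theorem tendsto_one_sub_pgf_div (hp : IsConvolutionSemigroup p) (hp0 : ∀ s, 0 ≤ s → 0 < p 0 s)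
    {u : ℝ} (hu : 0 ≤ u) (hu1 : u ≤ 1) :
    Tendsto (fun s => (1 - pgf p u s) / s) (𝓝[>] 0) (𝓝 (-log (pgf p u 1))) := by
  refine (tendsto_one_sub_exp_neg_mul_div _).congr' ?_
  filter_upwards [self_mem_nhdsWithin] with s hs
  rw [hp.pgf_eq_exp hp0 hu hu1 (le_of_lt hs), neg_mul, neg_neg, mul_comm]

theorem tendsto_one_sub_zero_div (hp : IsConvolutionSemigroup p) (hp0 : ∀ s, 0 ≤ s → 0 < p 0 s) :
    Tendsto (fun s => (1 - p 0 s) / s) (𝓝[>] 0) (𝓝 (-log (p 0 1))) := by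
  simpa only [pgf_zero_left] using hp.tendsto_one_sub_pgf_div hp0 le_rfl zero_le_one

theorem zero_add_sum_le_pgf (hp : IsConvolutionSemigroup p) (K : ℕ) (s : ℝ) {u : ℝ} (hu : 0 ≤ u)
    (hu1 : u ≤ 1) : p 0 s + ∑ k ∈ range K, p (k + 1) s * u ^ (k + 1) ≤ pgf p u s := by
  have := (hp.summable_mul_pow s hu hu1).sum_le_tsum (range (K + 1))
    fun n _ => mul_nonneg (hp.nonneg n s) (pow_nonneg hu n)
  rwa [sum_range_succ', pow_zero, mul_one, add_comm] at this

theorem pgf_le_zero_add_sum (hp : IsConvolutionSemigroup p) (K : ℕ) (s : ℝ) {u : ℝ} (hu : 0 ≤ u)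
    (hu1 : u ≤ 1) : pgf p u s ≤
      p 0 s + ∑ k ∈ range K, p (k + 1) s * u ^ (k + 1) + u ^ (K + 1) * (1 - p 0 s) := by
  have hsum := hp.summable_mul_pow s hu hu1
  have hsum1 := (hp.hasSum_one s).summable
  have hmass : ∑' n, p (n + (K + 1)) s ≤ 1 - p 0 s := by
    have := hsum1.sum_add_tsum_nat_add (K + 1)
    rw [(hp.hasSum_one s).tsum_eq, sum_range_succ'] at this
    linarith [sum_nonneg fun k (_ : k ∈ range K) => hp.nonneg (k + 1) s]
  have htail : ∑' n, p (n + (K + 1)) s * u ^ (n + (K + 1)) ≤ u ^ (K + 1) * (1 - p 0 s) :=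
    calc ∑' n, p (n + (K + 1)) s * u ^ (n + (K + 1))
        ≤ ∑' n, u ^ (K + 1) * p (n + (K + 1)) s :=
          ((summable_nat_add_iff (K + 1)).2 hsum).tsum_le_tsum (fun n => by
            rw [mul_comm]
            exact mul_le_mul_of_nonneg_right (pow_le_pow_of_le_one hu hu1 (by omega))
              (hp.nonneg _ s))
            (((summable_nat_add_iff (K + 1)).2 hsum1).mul_left _)
      _ ≤ u ^ (K + 1) * (1 - p 0 s) := by
          rw [tsum_mul_left]
          exact mul_le_mul_of_nonneg_left hmass (pow_nonneg hu _)
  have := hsum.sum_add_tsum_nat_add (K + 1)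
  rw [sum_range_succ', pow_zero, mul_one] at this
  rw [pgf, ← this]
  linarith

section HasJumpRates

variable {c : ℕ → ℝ}

theorem rate_nonneg (hp : IsConvolutionSemigroup p) (hc : HasJumpRates p c) (k : ℕ) :
    0 ≤ c (k + 1) :=
  ge_of_tendsto (hc k) <| by
    filter_upwards [self_mem_nhdsWithin] with s hs using div_nonneg (hp.nonneg _ s) (le_of_lt hs)

theorem sum_rate_le (hp : IsConvolutionSemigroup p) (hp0 : ∀ s, 0 ≤ s → 0 < p 0 s)
    (hc : HasJumpRates p c) (K : ℕ) {u : ℝ} (hu : 0 ≤ u) (hu1 : u ≤ 1) :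
    ∑ k ∈ range K, c (k + 1) * u ^ (k + 1) ≤ log (pgf p u 1) - log (p 0 1) := by
  have := le_of_tendsto_of_tendsto (hp.tendsto_one_sub_pgf_div hp0 hu hu1)
    ((hp.tendsto_one_sub_zero_div hp0).sub (hc.tendsto_sum_div K u)) <| by
      filter_upwards [self_mem_nhdsWithin] with s (hs : 0 < s)
      rw [← sub_div]
      exact div_le_div_of_nonneg_right (by linarith [hp.zero_add_sum_le_pgf K s hu hu1]) hs.le
  linarith

theorem log_pgf_sub_le_sum_rate (hp : IsConvolutionSemigroup p) (hp0 : ∀ s, 0 ≤ s → 0 < p 0 s)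
    (hc : HasJumpRates p c) (K : ℕ) {u : ℝ} (hu : 0 ≤ u) (hu1 : u ≤ 1) :
    log (pgf p u 1) - log (p 0 1) + u ^ (K + 1) * log (p 0 1) ≤
      ∑ k ∈ range K, c (k + 1) * u ^ (k + 1) := by
  have := le_of_tendsto_of_tendsto
    (((hp.tendsto_one_sub_zero_div hp0).mul_const (1 - u ^ (K + 1))).sub
      (hc.tendsto_sum_div K u))
    (hp.tendsto_one_sub_pgf_div hp0 hu hu1) <| by
      filter_upwards [self_mem_nhdsWithin] with s (hs : 0 < s)
      rw [div_mul_eq_mul_div, ← sub_div]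
      exact div_le_div_of_nonneg_right (by linarith [hp.pgf_le_zero_add_sum K s hu hu1]) hs.le
  linarith

theorem hasSum_rate_mul_pow (hp : IsConvolutionSemigroup p) (hp0 : ∀ s, 0 ≤ s → 0 < p 0 s)
    (hc : HasJumpRates p c) {u : ℝ} (hu : 0 ≤ u) (hu1 : u < 1) :
    HasSum (fun k => c (k + 1) * u ^ (k + 1)) (log (pgf p u 1) - log (p 0 1)) := by
  rw [hasSum_iff_tendsto_nat_of_nonneg fun k => mul_nonneg (hp.rate_nonneg hc k) (pow_nonneg hu _)]
  have hlow : Tendsto (fun K : ℕ => log (pgf p u 1) - log (p 0 1) + u ^ (K + 1) * log (p 0 1))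
      atTop (𝓝 (log (pgf p u 1) - log (p 0 1))) := by
    simpa using tendsto_const_nhds.add (((tendsto_pow_atTop_nhds_zero_of_lt_one hu hu1).comp
      (tendsto_add_atTop_nat 1)).mul_const (log (p 0 1)))
  exact tendsto_of_tendsto_of_tendsto_of_le_of_le hlow tendsto_const_nhds
    (fun K => hp.log_pgf_sub_le_sum_rate hp0 hc K hu hu1.le)
    (fun K => hp.sum_rate_le hp0 hc K hu hu1.le)

theorem pgf_eq_exp_of_hasSum_rate (hp : IsConvolutionSemigroup p) (hc : HasJumpRates p c)
    (hc1 : c 1 ≠ 0) {R : ℝ → ℝ}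
    (hR : ∀ u ∈ Set.Ico (0 : ℝ) 1, HasSum (fun k => c (k + 1) * u ^ (k + 1)) (R u))
    (hR1 : Tendsto R (𝓝[<] 1) (𝓝 (R 1))) {u : ℝ} (hu : u ∈ Set.Ico (0 : ℝ) 1) {t : ℝ}
    (ht : 0 ≤ t) : pgf p u t = exp (t * (R u - R 1)) := by
  have hp0 (s : ℝ) (hs : 0 ≤ s) : 0 < p 0 s := hp.zero_pos (hc 0) hc1 hs
  have hlog : ∀ v ∈ Set.Ico (0 : ℝ) 1, log (pgf p v 1) = R v + log (p 0 1) := fun v hv => by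
    linarith [(hp.hasSum_rate_mul_pow hp0 hc hv.1 hv.2).unique (hR v hv)]
  -- Abel's theorem: `pgf p v 1 → ∑ p n 1 = 1` as `v → 1⁻`, which pins down `R 1`.
  have habel : Tendsto (fun v => log (pgf p v 1)) (𝓝[<] 1) (𝓝 0) := by
    simpa [pgf, Function.comp_def] using (continuousAt_log one_ne_zero).tendsto.comp
      (Real.tendsto_tsum_powerSeries_nhdsWithin_lt (hp.hasSum_one 1).tendsto_sum_nat)
  have hR1' : R 1 + log (p 0 1) = 0 :=
    tendsto_nhds_unique (hR1.add_const _) <| habel.congr' <| by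
      filter_upwards [Ico_mem_nhdsLT one_pos] with v hv using hlog v hv
  rw [hp.pgf_eq_exp hp0 hu.1 hu.2.le ht, hlog u hu]
  congr 2
  linarith

end HasJumpRates

theorem pgf_eq_of_hasJumpRates_bellRate (hp : IsConvolutionSemigroup p) {l α θ : ℝ} (hl : 0 < l)
    (hα : 0 < α) (hθ : 0 < θ) (hc : HasJumpRates p (bellRate l α θ)) {u : ℝ}
    (hu : u ∈ Set.Ico (0 : ℝ) 1) {t : ℝ} (ht : 0 ≤ t) :
    pgf p u t = exp (t * (α * (degExp l 1 (θ * u) - 1) - α * (degExp l 1 θ - 1))) := by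
  obtain ⟨m, hm⟩ := exists_natCast_mul_eq_one_of_dFall_nonneg hl fun
    | 0 => by simp [dFall]
    | k + 1 => by
      have : 0 ≤ dFall l 1 (k + 1) * (α * θ ^ (k + 1) / (k + 1).factorial) := by
        convert hp.rate_nonneg hc k using 1
        rw [bellRate]
        ring
      exact nonneg_of_mul_nonneg_left this (by positivity)
  have hR1 : Tendsto (fun u => α * (degExp l 1 (θ * u) - 1)) (𝓝[<] 1)
      (𝓝 (α * (degExp l 1 (θ * 1) - 1))) := by
    simp only [degExp_one_eq_pow hm]
    exact (Continuous.tendsto (by fun_prop) 1).mono_left nhdsWithin_le_nhds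
  rw [hp.pgf_eq_exp_of_hasSum_rate hc (by simp [bellRate, dFall, hα.ne', hθ.ne'])
    (fun u _ => hasSum_bellRate_succ_mul_pow hm α θ u) hR1 hu ht, mul_one]

theorem eq_of_hasSum_pgf (hp : IsConvolutionSemigroup p) {t : ℝ} {b : ℕ → ℝ}
    (hb : ∀ u ∈ Set.Ioo (0 : ℝ) 1, HasSum (fun n => b n * u ^ n) (pgf p u t)) (n : ℕ) :
    p n t = b n := by
  have := eq_zero_of_hasSum_mul_pow_eq_zero (d := fun n => p n t - b n) one_pos fun u hu => by
    simpa [sub_mul, pgf] using (hp.summable_mul_pow t hu.1.le hu.2.le).hasSum.sub (hb u hu)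
  exact sub_eq_zero.1 (congrFun this n)

end IsConvolutionSemigroup

section CountingProcess

variable {Ω : Type*} [MeasurableSpace Ω] {P : Measure Ω} {N : ℝ → Ω → ℕ}

theorem hasSum_measure_eq_one [IsProbabilityMeasure P] (hNmeas : ∀ t, Measurable (N t)) (s : ℝ) :
    HasSum (fun k => (P {ω | N s ω = k}).toReal) 1 := by
  have htsum : ∑' k, P {ω | N s ω = k} = 1 := by
    have := tsum_measure_preimage_singleton (μ := P) Set.countable_univ
      fun k _ => hNmeas s (measurableSet_singleton k)
    rwa [tsum_univ (f := fun k => P (N s ⁻¹' {k})), Set.preimage_univ, measure_univ] at this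
  have := ENNReal.hasSum_toReal (f := fun k => P {ω | N s ω = k}) (htsum ▸ ENNReal.one_ne_top)
  rwa [← ENNReal.tsum_toReal_eq fun k => measure_ne_top P _, htsum, ENNReal.toReal_one] at this

theorem measure_add_eq_sum_antidiagonal_s18 (hNmeas : ∀ t, Measurable (N t)) (hN0 : ∀ ω, N 0 ω = 0)
    (hmono : ∀ ω, ∀ ⦃s t : ℝ⦄, s ≤ t → N s ω ≤ N t ω)
    (hstat : ∀ t s : ℝ, 0 ≤ t → 0 ≤ s → ∀ k : ℕ,
      P {ω | N (t + s) ω - N t ω = k} = P {ω | N s ω = k})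
    (hindep : ∀ t₁ t₂ t₃ : ℝ, 0 ≤ t₁ → t₁ ≤ t₂ → t₂ ≤ t₃ →
      IndepFun (fun ω => N t₂ ω - N t₁ ω) (fun ω => N t₃ ω - N t₂ ω) P)
    (k : ℕ) {u v : ℝ} (hu : 0 ≤ u) (hv : 0 ≤ v) :
    P {ω | N (u + v) ω = k} =
      ∑ ij ∈ antidiagonal k, P {ω | N u ω = ij.1} * P {ω | N v ω = ij.2} := by
  have huv : u ≤ u + v := le_add_of_nonneg_right hv
  have hsplit : {ω | N (u + v) ω = k} =
      ⋃ ij ∈ antidiagonal k, {ω | N u ω = ij.1} ∩ {ω | N (u + v) ω - N u ω = ij.2} := by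
    ext ω
    have := hmono ω huv
    simp only [Set.mem_ofPred_eq, Set.mem_iUnion, Set.mem_inter_iff,
      Finset.HasAntidiagonal.mem_antidiagonal, exists_prop, Prod.exists]
    exact ⟨fun h => ⟨N u ω, k - N u ω, by omega, rfl, by omega⟩, fun ⟨i, j, h, hi, hj⟩ => by omega⟩
  have hdisj : Set.PairwiseDisjoint (antidiagonal k : Set (ℕ × ℕ))
      fun ij => {ω | N u ω = ij.1} ∩ {ω | N (u + v) ω - N u ω = ij.2} :=
    fun ij _ ij' _ hne => Set.disjoint_left.2 fun ω ⟨h1, h2⟩ ⟨h1', h2'⟩ =>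
      hne (Prod.ext (h1.symm.trans h1') (h2.symm.trans h2'))
  have hindep' : IndepFun (N u) (fun ω => N (u + v) ω - N u ω) P := by
    simpa [hN0] using hindep 0 u (u + v) le_rfl hu huv
  rw [hsplit, measure_biUnion_finset hdisj fun ij _ => (hNmeas u (measurableSet_singleton _)).inter
    ((hNmeas _).sub (hNmeas u) (measurableSet_singleton _))]
  refine sum_congr rfl fun ij _ => ?_
  rw [← hstat u v hu hv]
  exact hindep'.measure_inter_preimage_eq_mul _ _ (measurableSet_singleton _)
    (measurableSet_singleton _)

theorem isConvolutionSemigroup_of_indepIncrements [IsProbabilityMeasure P]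
    (hNmeas : ∀ t, Measurable (N t)) (hN0 : ∀ ω, N 0 ω = 0)
    (hmono : ∀ ω, ∀ ⦃s t : ℝ⦄, s ≤ t → N s ω ≤ N t ω)
    (hstat : ∀ t s : ℝ, 0 ≤ t → 0 ≤ s → ∀ k : ℕ,
      P {ω | N (t + s) ω - N t ω = k} = P {ω | N s ω = k})
    (hindep : ∀ t₁ t₂ t₃ : ℝ, 0 ≤ t₁ → t₁ ≤ t₂ → t₂ ≤ t₃ →
      IndepFun (fun ω => N t₂ ω - N t₁ ω) (fun ω => N t₃ ω - N t₂ ω) P) :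
    IsConvolutionSemigroup fun k s => (P {ω | N s ω = k}).toReal where
  nonneg _ _ := ENNReal.toReal_nonneg
  hasSum_one := hasSum_measure_eq_one hNmeas
  add k u v hu hv := by
    rw [measure_add_eq_sum_antidiagonal_s18 hNmeas hN0 hmono hstat hindep k hu hv, ENNReal.toReal_sum
      fun _ _ => ENNReal.mul_ne_top (measure_ne_top _ _) (measure_ne_top _ _)]
    simp_rw [ENNReal.toReal_mul]
  zero_zero := by simp [hN0]

end CountingProcess

theorem degenerate_bell_process_marginal_distribution (l α θ : ℝ) (hl : l ∈ Set.Ioc (0 : ℝ) 1) (hα : 0 < α) (hθ : 0 < θ)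
    {Ω : Type*} [MeasurableSpace Ω] (P : Measure Ω) [IsProbabilityMeasure P]
    (N : ℝ → Ω → ℕ)
    (hNmeas : ∀ t : ℝ, Measurable (N t))
    (hN0 : ∀ ω, N 0 ω = 0)
    (hmono : ∀ ω, ∀ ⦃s t : ℝ⦄, s ≤ t → N s ω ≤ N t ω)
    (hstat : ∀ t s : ℝ, 0 ≤ t → 0 ≤ s → ∀ k : ℕ,
      P {ω | N (t + s) ω - N t ω = k} = P {ω | N s ω = k})
    (hindep : ∀ t₁ t₂ t₃ : ℝ, 0 ≤ t₁ → t₁ ≤ t₂ → t₂ ≤ t₃ →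
      IndepFun (fun ω => N t₂ ω - N t₁ ω) (fun ω => N t₃ ω - N t₂ ω) P)
    (hrate : ∀ k : ℕ, 1 ≤ k → ∀ t : ℝ, 0 ≤ t →
      (fun s => (P {ω | N (t + s) ω - N t ω = k}).toReal
          - α * s * dFall l 1 k * θ ^ k / (k.factorial : ℝ))
        =o[nhdsWithin 0 (Set.Ioi 0)] (fun s : ℝ => s))
    (φ : ℕ → ℝ → ℝ)
    (hφ : ∀ x t : ℝ, 0 < 1 + l * t →
      HasSum (fun n : ℕ => φ n x * t ^ n / (n.factorial : ℝ))
        (Real.exp (x * (degExp l 1 t - 1)))) :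
    ∀ t : ℝ, 0 < t → ∀ k : ℕ,
      P {ω | N t ω = k} =
        ENNReal.ofReal (Real.exp (-(α * t * (degExp l 1 θ - 1))) * θ ^ k *
          φ k (α * t) / (k.factorial : ℝ)) := by
  intro t ht k
  set p : ℕ → ℝ → ℝ := fun k s => (P {ω | N s ω = k}).toReal
  have hp : IsConvolutionSemigroup p :=
    isConvolutionSemigroup_of_indepIncrements hNmeas hN0 hmono hstat hindep
  have hc : HasJumpRates p (bellRate l α θ) := fun k =>
    tendsto_div_of_isLittleO_sub_mul <| (hrate (k + 1) k.succ_pos 0 le_rfl).congr_left fun s => by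
      simp only [p, bellRate, zero_add, hN0, Nat.sub_zero]
      ring
  set b : ℕ → ℝ := fun n =>
    exp (-(α * t * (degExp l 1 θ - 1))) * θ ^ n * φ n (α * t) / n.factorial
  have hb (u : ℝ) (hu : u ∈ Set.Ioo (0 : ℝ) 1) : HasSum (fun n => b n * u ^ n) (pgf p u t) := by
    rw [hp.pgf_eq_of_hasJumpRates_bellRate hl.1 hα hθ hc (Set.Ioo_subset_Ico_self hu) ht.le]
    have := (hφ (α * t) (θ * u) (by linarith [mul_pos hl.1 (mul_pos hθ hu.1)])).mul_left
      (exp (-(α * t * (degExp l 1 θ - 1))))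
    convert this using 1
    · rfl
    · ext n
      simp only [b, mul_pow]
      ring
    · rw [← exp_add]
      ring_nf
  calc P {ω | N t ω = k} = ENNReal.ofReal (p k t) :=
        (ENNReal.ofReal_toReal (measure_ne_top P _)).symm
    _ = ENNReal.ofReal (b k) := by rw [hp.eq_of_hasSum_pgf hb k]
end
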